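/- Let f be a transcendental entire function, R > 0 with M(r) > r for r ≥ R, and suppose A_R(f) is a spider's web. Then for every unbounded connected set Γ ⊆ ℂ (in particular every path to infinity), f is unbounded on Γ; that is, there is no path to infinity on which f is bounded. -/

import Mathlib

open Complex Filter Set Function

noncomputable def maxMod (f : ℂ → ℂ) (r : ℝ) : ℝ :=
  sSup ((fun z => ‖f z‖) '' {z : ℂ | ‖z‖ = r})

def TranscendentalEntire (f : ℂ → ℂ) : Prop :=
  Differentiable ℂ f ∧ ¬ ∃ p : Polynomial ℂ, ∀ z, f z = p.eval z

noncomputable def ALevel (f : ℂ → ℂ) (R : ℝ) (L : ℤ) : Set ℂ :=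
  {z : ℂ | ∀ n : ℕ, 0 ≤ (n : ℤ) + L →
    ‖f^[n] z‖ ≥ (maxMod f)^[((n : ℤ) + L).toNat] R}

noncomputable def Afast (f : ℂ → ℂ) (R : ℝ) : Set ℂ :=
  ⋃ L : ℕ, ALevel f R (-(L : ℤ))

def SpidersWeb (E : Set ℂ) : Prop :=
  IsConnected E ∧ ∃ G : ℕ → Set ℂ,
    (∀ n, IsOpen (G n) ∧ Bornology.IsBounded (G n) ∧ IsConnected (G n) ∧
      SimplyConnectedSpace (G n) ∧ G n ⊆ G (n + 1) ∧ frontier (G n) ⊆ E) ∧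
    (⋃ n, G n) = Set.univ

/-!
If `∂U ⊆ A_R^m(f)` for a bounded open `U ⊇ {|z| < M^m(R)}`, then `f(U)` is bounded and
open with `∂f(U) ⊆ f(∂U) ⊆ A_R^{m+1}(f)`, and it contains `f(0)`, of modulus `< M^{m+1}(R)`;
since the disc `{|w| < M^{m+1}(R)}` does not meet `∂f(U)`, it lies in `f(U)`. Starting from a
domain `G_n` of the spider's web, this yields for every `m` a bounded open set containing
`{|z| < M^m(R)}` on whose boundary `|f| ≥ M^{m+1}(R)`. An unbounded connected set meets all these
boundaries, and `M^m(R) → ∞`.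
-/

open Metric Bornology

section Topology

theorem IsPreconnected.subset_of_disjoint_frontier {X : Type*} [TopologicalSpace X] {s u : Set X}
    (hs : IsPreconnected s) (hu : IsOpen u) (hsu : (s ∩ u).Nonempty)
    (hfr : Disjoint s (frontier u)) : s ⊆ u :=
  hs.subset_of_closure_inter_subset hu hsu fun x ⟨hxc, hxs⟩ => by
    by_contra hxu
    exact hfr.ne_of_mem hxs ⟨hxc, by rwa [hu.interior_eq]⟩ rfl

theorem frontier_image_subset_image_frontier {X Y : Type*} [TopologicalSpace X]
    [TopologicalSpace Y] [T2Space Y] {f : X → Y} (hf : Continuous f) (hfo : IsOpenMap f)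
    {s : Set X} (hs : IsCompact (closure s)) : frontier (f '' s) ⊆ f '' frontier s := by
  rintro w ⟨hwc, hwi⟩
  have hcl : closure (f '' s) ⊆ f '' closure s :=
    closure_minimal (image_mono subset_closure) (hs.image hf).isClosed
  obtain ⟨z, hzc, rfl⟩ := hcl hwc
  refine ⟨z, ⟨hzc, fun hzi => hwi ?_⟩, rfl⟩
  exact hfo.image_interior_subset s ⟨z, hzi, rfl⟩

theorem SpidersWeb.exists_superset {E K : Set ℂ} (hE : SpidersWeb E) (hK : IsBounded K) :
    ∃ U : Set ℂ, IsOpen U ∧ IsBounded U ∧ K ⊆ U ∧ frontier U ⊆ E := by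
  obtain ⟨-, G, hG, hcover⟩ := hE
  have hmono : Monotone G := monotone_nat_of_le_succ fun n => (hG n).2.2.2.2.1
  obtain ⟨n, hn⟩ := hK.isCompact_closure.elim_directed_cover G (fun n => (hG n).1)
    (hcover ▸ subset_univ _) hmono.directed_le
  exact ⟨G n, (hG n).1, (hG n).2.1, subset_closure.trans hn, (hG n).2.2.2.2.2⟩

end Topology

section Iterate

variable {α : Type*} [Preorder α] {g : α → α} {R : α}

theorem le_iterate_of_forall_lt_self (hg : ∀ r ≥ R, g r > r) (m : ℕ) : R ≤ g^[m] R := by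
  induction m with
  | zero => exact le_rfl
  | succ m ih =>
    rw [iterate_succ_apply']
    exact ih.trans (hg _ ih).le

theorem iterate_lt_iterate_succ (hg : ∀ r ≥ R, g r > r) (m : ℕ) : g^[m] R < g^[m + 1] R := by
  rw [iterate_succ_apply']
  exact hg _ (le_iterate_of_forall_lt_self hg m)

end Iterate

section MaxMod

variable {f : ℂ → ℂ}

theorem norm_le_maxMod (hf : Continuous f) (z : ℂ) : ‖f z‖ ≤ maxMod f ‖z‖ := by
  have hsphere : {w : ℂ | ‖w‖ = ‖z‖} = sphere 0 ‖z‖ := by ext; simp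
  refine le_csSup ?_ ⟨z, rfl, rfl⟩
  rw [hsphere]
  exact ((isCompact_sphere 0 _).image (continuous_norm.comp hf)).bddAbove

theorem norm_le_maxMod_of_norm_le (hf : Differentiable ℂ f) {z : ℂ} {r : ℝ}
    (hz : ‖z‖ ≤ r) : ‖f z‖ ≤ maxMod f r := by
  rcases hz.eq_or_lt with rfl | hz
  · exact norm_le_maxMod hf.continuous z
  have hr : r ≠ 0 := ((norm_nonneg z).trans_lt hz).ne'
  refine Complex.norm_le_of_forall_mem_frontier_norm_le isBounded_ball hf.diffContOnCl
    (fun w hw => ?_) (by rw [closure_ball _ hr]; exact mem_closedBall_zero_iff.mpr hz.le)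
  rw [frontier_ball _ hr, mem_sphere_zero_iff_norm] at hw
  exact hw ▸ norm_le_maxMod hf.continuous w

theorem norm_lt_maxMod (hf : Differentiable ℂ f) (hfo : IsOpenMap f) {z : ℂ} {r : ℝ}
    (hz : ‖z‖ < r) : ‖f z‖ < maxMod f r := by
  have himage : f '' ball 0 r ⊆ closedBall 0 (maxMod f r) := by
    rintro _ ⟨w, hw, rfl⟩
    exact mem_closedBall_zero_iff.mpr
      (norm_le_maxMod_of_norm_le hf (mem_ball_zero_iff.mp hw).le)
  have hopen := (hfo _ isOpen_ball).subset_interior_iff.mpr himage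
  rw [interior_closedBall'] at hopen
  exact mem_ball_zero_iff.mp (hopen ⟨z, mem_ball_zero_iff.mpr hz, rfl⟩)

/-- If `M^m(R)` increased to a finite limit `ℓ`, then `M(ℓ) > ℓ` would be witnessed by a
point of modulus slightly less than `ℓ`, hence less than some `M^m(R)`, where
`|f| ≤ M^{m+1}(R) ≤ ℓ`. -/
theorem not_bddAbove_range_iterate_maxMod (hf : Differentiable ℂ f) {R : ℝ} (hR : 0 < R)
    (hM : ∀ r ≥ R, maxMod f r > r) : ¬ BddAbove (range fun m => (maxMod f)^[m] R) := by
  intro hbdd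
  set ℓ := ⨆ m, (maxMod f)^[m] R
  have hle : ∀ m, (maxMod f)^[m] R ≤ ℓ := le_ciSup hbdd
  have hRℓ : R ≤ ℓ := hle 0
  have hne : ((fun z => ‖f z‖) '' {z : ℂ | ‖z‖ = ℓ}).Nonempty :=
    ⟨_, (ℓ : ℂ), by simpa using (hR.trans_le hRℓ).le, rfl⟩
  obtain ⟨_, ⟨w, hw, rfl⟩, hwℓ⟩ := exists_lt_of_lt_csSup hne (hM ℓ hRℓ)
  have hwcl : w ∈ closure (ball 0 ℓ) := by
    rw [closure_ball _ (hR.trans_le hRℓ).ne']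
    exact mem_closedBall_zero_iff.mpr hw.le
  obtain ⟨z, hzℓ, hz⟩ := mem_closure_iff.mp hwcl {z | ℓ < ‖f z‖}
    (isOpen_lt continuous_const (continuous_norm.comp hf.continuous)) hwℓ
  obtain ⟨m, hm⟩ := exists_lt_of_lt_ciSup (mem_ball_zero_iff.mp hz)
  have : ‖f z‖ ≤ ℓ := calc
    ‖f z‖ ≤ maxMod f ((maxMod f)^[m] R) := norm_le_maxMod_of_norm_le hf hm.le
    _ = (maxMod f)^[m + 1] R := (iterate_succ_apply' _ _ _).symm
    _ ≤ ℓ := hle _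
  exact (not_lt.mpr this) hzℓ

theorem ball_maxMod_subset_image (hf : Differentiable ℂ f) (hfo : IsOpenMap f) {U : Set ℂ}
    (hUo : IsOpen U) (hUb : IsBounded U) {r : ℝ} (hr : 0 < r) (hrU : ball 0 r ⊆ U)
    (hfr : ∀ z ∈ frontier U, maxMod f r ≤ ‖f z‖) : ball 0 (maxMod f r) ⊆ f '' U := by
  refine (convex_ball _ _).isPreconnected.subset_of_disjoint_frontier (hfo U hUo)
    ⟨f 0, ?_, 0, hrU (mem_ball_self hr), rfl⟩ ?_
  · exact mem_ball_zero_iff.mpr (norm_lt_maxMod hf hfo (by simpa using hr))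
  · refine disjoint_left.mpr fun w hw hwfr => ?_
    obtain ⟨z, hz, rfl⟩ :=
      frontier_image_subset_image_frontier hf.continuous hfo hUb.isCompact_closure hwfr
    exact (mem_ball_zero_iff.mp hw).not_ge (hfr z hz)

end MaxMod

theorem TranscendentalEntire.isOpenMap {f : ℂ → ℂ} (hf : TranscendentalEntire f) :
    IsOpenMap f := by
  have hf' : AnalyticOnNhd ℂ f univ := analyticOnNhd_univ_iff_differentiable.mpr hf.1
  obtain ⟨w, hw⟩ | h := hf'.is_constant_or_isOpenMap
  · exact (hf.2 ⟨Polynomial.C w, fun z => by simp [hw z]⟩).elim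
  · exact h

section ALevel

variable {f : ℂ → ℂ} {R : ℝ}

theorem mapsTo_ALevel (L : ℤ) : MapsTo f (ALevel f R L) (ALevel f R (L + 1)) := by
  intro z hz n hn
  have h := hz (n + 1) (by push_cast; omega)
  rw [iterate_succ_apply] at h
  convert h using 3
  push_cast
  ring

theorem iterate_maxMod_le_norm_of_mem_ALevel {m : ℕ} {z : ℂ} (hz : z ∈ ALevel f R m) :
    (maxMod f)^[m] R ≤ ‖z‖ := by
  simpa using hz 0 (by simp)

theorem exists_ball_subset_frontier_subset_ALevel (hf : TranscendentalEntire f) (hR : 0 < R)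
    (hM : ∀ r ≥ R, maxMod f r > r) (hsw : SpidersWeb (ALevel f R 0)) (m : ℕ) :
    ∃ U : Set ℂ, IsOpen U ∧ IsBounded U ∧ ball 0 ((maxMod f)^[m] R) ⊆ U ∧
      frontier U ⊆ ALevel f R m := by
  induction m with
  | zero => simpa using hsw.exists_superset (isBounded_ball (x := 0) (r := R))
  | succ m ih =>
    obtain ⟨U, hUo, hUb, hball, hfr⟩ := ih
    have hfrV : frontier (f '' U) ⊆ ALevel f R (m + 1 : ℕ) := by
      rw [Nat.cast_succ]
      exact (frontier_image_subset_image_frontier hf.1.continuous hf.isOpenMap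
        hUb.isCompact_closure).trans (image_subset_iff.mpr (hfr.trans (mapsTo_ALevel _)))
    refine ⟨f '' U, hf.isOpenMap U hUo,
      (hUb.isCompact_closure.image hf.1.continuous).isBounded.subset
        (image_mono subset_closure), ?_, hfrV⟩
    rw [iterate_succ_apply']
    refine ball_maxMod_subset_image hf.1 hf.isOpenMap hUo hUb
      (hR.trans_le (le_iterate_of_forall_lt_self hM m)) hball fun z hz => ?_
    rw [← iterate_succ_apply' (maxMod f)]
    exact iterate_maxMod_le_norm_of_mem_ALevel (by exact_mod_cast mapsTo_ALevel _ (hfr hz))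

end ALevel

theorem unbounded_on_unbounded_connected (f : ℂ → ℂ) (hf : TranscendentalEntire f)
    (R : ℝ) (hR : 0 < R) (hM : ∀ r ≥ R, maxMod f r > r)
    (hsw : SpidersWeb (ALevel f R 0)) :
    ∀ Γ : Set ℂ, IsConnected Γ → ¬ Bornology.IsBounded Γ →
      ¬ Bornology.IsBounded (f '' Γ) := by
  intro Γ hΓ hΓu hfΓ
  obtain ⟨C, hC⟩ := isBounded_iff_forall_norm_le.mp hfΓ
  obtain ⟨x₀, hx₀⟩ := hΓ.nonempty
  obtain ⟨_, ⟨m, rfl⟩, hm⟩ :=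
    not_bddAbove_iff.mp (not_bddAbove_range_iterate_maxMod hf.1 hR hM) (max ‖x₀‖ C)
  obtain ⟨U, hUo, hUb, hball, hfr⟩ := exists_ball_subset_frontier_subset_ALevel hf hR hM hsw m
  have hx₀U : x₀ ∈ U := hball (mem_ball_zero_iff.mpr ((le_max_left _ _).trans_lt hm))
  obtain ⟨z, hzΓ, hzU⟩ := not_disjoint_iff.mp fun hdisj =>
    hΓu (hUb.subset (hΓ.isPreconnected.subset_of_disjoint_frontier hUo ⟨x₀, hx₀, hx₀U⟩ hdisj))
  have hfz : (maxMod f)^[m + 1] R ≤ ‖f z‖ :=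
    iterate_maxMod_le_norm_of_mem_ALevel (by exact_mod_cast mapsTo_ALevel _ (hfr hzU))
  linarith [hC _ (mem_image_of_mem f hzΓ), le_max_right ‖x₀‖ C, iterate_lt_iterate_succ hM m]
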